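/- Fix q with 0 < q ≤ 1, set p = √(1 − q²), and let H = ℓ²(ℕ, ℂ). Let R be a rank-one bounded operator on H with operator norm ‖R‖ < min{2q, 2p}. Define 𝔖(R) = { A ∈ SU(C_q) : R = A + B for some B ∈ SU(C_q) } and 𝔐(R) = span_ℝ 𝔖(R), the real linear span of 𝔖(R). Then 𝔐(R) is an infinite-dimensional real vector space. -/

import Mathlib

/-!
Write `R = u ⊗ v*` with `‖u‖ = 1`, so that `‖v‖ = ‖R‖`. If `‖u‖ = ‖g‖ = 1` and `|⟨g, u⟩| = q`,
then `u ⊗ g*` lies in `SU(C_q)`: a unitary carries the orthonormal pair `(e₀, e₁)` to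
`(μ u, (g - ⟨g, u⟩ u) / p)` with `|μ| = 1`, and hence `C_q` to `μ (u ⊗ g*)`. So `u ⊗ g* ∈ 𝔖(R)`
whenever `g` and `v - g` are unit vectors with `|⟨g, u⟩| = |⟨v - g, u⟩| = q`. The bound
`‖R‖ < min(2q, 2p)` makes this hold for every `g = c + y` with `y ⊥ K := span{u, v}`, `‖y‖ = s`,
for a suitable centre `c ∈ K` and radius `s > 0`. Subtracting the antipodal points `c ± y` puts
`u ⊗ z*` into `𝔐(R)` for every `z ∈ Kᗮ`, and `Kᗮ` is infinite-dimensional.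
-/


open scoped ComplexConjugate

noncomputable section

/-- `H = ℓ²(ℕ, ℂ)`. -/
abbrev H : Type := lp (fun _ : ℕ => ℂ) 2

/-- Entrywise complex conjugation on `ℓ²(ℕ, ℂ)`: `(J x) n = conj (x n)`. -/
def J : H → H := fun x => star x

theorem J_apply (x : H) (n : ℕ) : (J x) n = conj (x n) := rfl

/-- The complex-linear bounded operator `J ∘ A ∘ J`. -/
def conjOp (A : H →L[ℂ] H) : H →L[ℂ] H :=
  LinearMap.mkContinuous
    { toFun := fun x => J (A (J x))
      map_add' := by intro x y; simp [J, star_add]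
      map_smul' := by intro c x; simp [J, star_smul] }
    ‖A‖
    (by
      intro x
      simp only [LinearMap.coe_mk, AddHom.coe_mk, J, norm_star]
      calc ‖A (star x)‖ ≤ ‖A‖ * ‖star x‖ := A.le_opNorm _
        _ = ‖A‖ * ‖x‖ := by rw [norm_star])

theorem conjOp_apply (A : H →L[ℂ] H) (x : H) : conjOp A x = J (A (J x)) := rfl

/-- The `q`-numerical radius.  The paper's inner product `⟨·,·⟩` is linear in the
first argument, while Mathlib's `inner x y` is linear in `y`; hence the paper's
`⟨x, y⟩` is `inner y x` below. -/
def rq (q : ℝ) (A : H →L[ℂ] H) : ℝ :=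
  sSup { r : ℝ | ∃ x y : H, ‖x‖ = 1 ∧ ‖y‖ = 1 ∧ (inner ℂ y x : ℂ) = (q : ℂ) ∧
    r = ‖(inner ℂ y (A x) : ℂ)‖ }

/-- The standard orthonormal basis of `ℓ²(ℕ, ℂ)`. -/
def e (n : ℕ) : H := lp.single 2 n (1 : ℂ)

/-- The rank-one operator `x ⊗ y* : v ↦ ⟨v, y⟩ • x` (paper convention, so in
Mathlib notation `v ↦ (inner y v) • x`). -/
def rankOneOp (x y : H) : H →L[ℂ] H := (innerSL ℂ y).smulRight x

theorem rankOneOp_apply (x y v : H) : rankOneOp x y v = (inner ℂ y v : ℂ) • x := rfl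

/-- The operator `C_q : x ↦ (q·⟨x, e₀⟩ + √(1 − q²)·⟨x, e₁⟩) • e₀`. -/
def Cq (q : ℝ) : H →L[ℂ] H :=
  rankOneOp (e 0) ((q : ℂ) • e 0 + (Real.sqrt (1 - q ^ 2) : ℂ) • e 1)

/-- The saturated unitary orbit `SU(C_q) = {λ · U* C_q U : |λ| = 1, U unitary}`. -/
def SUorbit (q : ℝ) : Set (H →L[ℂ] H) :=
  { T | ∃ (lam : ℂ) (U : H →L[ℂ] H), ‖lam‖ = 1 ∧ U ∈ unitary (H →L[ℂ] H) ∧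
      T = lam • (star U ∘L Cq q ∘L U) }

/-- The Hilbert–Schmidt norm `‖T‖₂ = (∑ₙ ‖T eₙ‖²)^{1/2}`. -/
def hsNorm (T : H →L[ℂ] H) : ℝ := Real.sqrt (∑' n : ℕ, ‖T (e n)‖ ^ 2)

open scoped InnerProductSpace
open InnerProductSpace

theorem IsStarProjection.one_add_smul_mem_unitary {A : Type*} [Ring A] [StarRing A]
    [Algebra ℂ A] [StarModule ℂ A] {p : A} (hp : IsStarProjection p) {μ : ℂ} (hμ : ‖μ‖ = 1) :
    1 + (μ - 1) • p ∈ unitary A := by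
  have mul_eq (a b : ℂ) : (1 + a • p) * (1 + b • p) = 1 + (a + b + a * b) • p := by
    simp only [mul_add, add_mul, one_mul, mul_one, smul_mul_smul_comm, hp.isIdempotentElem.eq]
    module
  have hμμ : conj μ * μ = 1 := by rw [Complex.conj_mul', hμ]; norm_num
  have hstar : star (1 + (μ - 1) • p) = 1 + (conj μ - 1) • p := by
    rw [star_add, star_one, star_smul, hp.isSelfAdjoint.star_eq, star_sub, star_one]; rfl
  have h₁ : conj μ - 1 + (μ - 1) + (conj μ - 1) * (μ - 1) = 0 := by linear_combination hμμ
  have h₂ : μ - 1 + (conj μ - 1) + (μ - 1) * (conj μ - 1) = 0 := by linear_combination hμμ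
  rw [Unitary.mem_iff, hstar, mul_eq, mul_eq, h₁, h₂, zero_smul, add_zero]
  exact ⟨rfl, rfl⟩

theorem Complex.exists_norm_eq_and_norm_sub_eq {α : ℂ} {r : ℝ} (h : ‖α‖ ≤ 2 * r) :
    ∃ β : ℂ, ‖β‖ = r ∧ ‖α - β‖ = r := by
  have hr : 0 ≤ r := by linarith [norm_nonneg α]
  set t := √(r ^ 2 - ‖α‖ ^ 2 / 4)
  have ht : t ^ 2 = r ^ 2 - ‖α‖ ^ 2 / 4 := Real.sq_sqrt (by nlinarith [norm_nonneg α])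
  set d := exp (arg α * I)
  have hd : ‖d‖ = 1 := norm_exp_ofReal_mul_I _
  have hnorm (s : ℝ) (hs : s ^ 2 = t ^ 2) : ‖(‖α‖ / 2 + s * I) * d‖ = r := by
    rw [norm_mul, hd, mul_one, ← ofReal_ofNat, ← ofReal_div, norm_add_mul_I, hs, ht]
    rw [show (‖α‖ / 2) ^ 2 + (r ^ 2 - ‖α‖ ^ 2 / 4) = r ^ 2 by ring, Real.sqrt_sq hr]
  refine ⟨(‖α‖ / 2 + t * I) * d, hnorm t rfl, ?_⟩
  have hsub : α - (‖α‖ / 2 + t * I) * d = (‖α‖ / 2 + ((-t : ℝ) : ℂ) * I) * d := by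
    nth_rewrite 1 [← norm_mul_exp_arg_mul_I α]
    push_cast
    ring
  rw [hsub, hnorm (-t) (by ring)]

section InnerProductSpace

variable {E : Type*} [NormedAddCommGroup E] [InnerProductSpace ℂ E]

theorem Submodule.reflection_sub_of_inner_eq {v w : E} (h : ‖v‖ = ‖w‖)
    (hvw : ⟪v, w⟫_ℂ = ⟪w, v⟫_ℂ) : reflection (ℂ ∙ (v - w))ᗮ v = w := by
  set R := reflection (ℂ ∙ (v - w))ᗮ
  have h₁ : R (v - w) = -(v - w) := reflection_orthogonalComplement_singleton_eq_neg (v - w)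
  have h₂ : R (v + w) = v + w := by
    apply reflection_mem_subspace_eq_self
    rw [Submodule.mem_orthogonal_singleton_iff_inner_right, inner_sub_left, inner_add_right,
      inner_add_right, inner_self_eq_norm_sq_to_K, inner_self_eq_norm_sq_to_K, h, hvw]
    ring
  have h₃ : (2 : ℂ) • R v = (2 : ℂ) • w := by
    rw [← map_smul, two_smul, show v + v = (v + w) + (v - w) by abel, map_add, h₁, h₂, two_smul]
    abel
  exact smul_right_injective E two_ne_zero h₃

theorem norm_add_sq_eq_of_inner_eq_zero {x y : E} (h : ⟪x, y⟫_ℂ = 0) :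
    ‖x + y‖ ^ 2 = ‖x‖ ^ 2 + ‖y‖ ^ 2 := by
  simpa only [← sq] using norm_add_sq_eq_norm_sq_add_norm_sq_of_inner_eq_zero x y h

theorem exists_center_of_norm_lt {q : ℝ} {u v : E} (hu : ‖u‖ = 1) (hvq : ‖v‖ < 2 * q)
    (hvp : ‖v‖ < 2 * √(1 - q ^ 2)) :
    ∃ (c : E) (s : ℝ), 0 < s ∧ c ∈ Submodule.span ℂ {u, v} ∧ ‖c‖ ^ 2 + s ^ 2 = 1 ∧
      ‖v - c‖ ^ 2 + s ^ 2 = 1 ∧ ‖⟪u, c⟫_ℂ‖ = q ∧ ‖⟪u, v - c⟫_ℂ‖ = q := by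
  have hp2 : √(1 - q ^ 2) ^ 2 = 1 - q ^ 2 :=
    Real.sq_sqrt (Real.sqrt_pos.mp (by linarith [norm_nonneg v])).le
  set α := ⟪u, v⟫_ℂ
  set w := v - α • u
  have huw : ⟪u, w⟫_ℂ = 0 := by simp [w, α, hu]
  have hv : ‖v‖ ^ 2 = ‖α‖ ^ 2 + ‖w‖ ^ 2 := by
    have := norm_add_sq_eq_of_inner_eq_zero (x := α • u) (y := w)
      (by rw [inner_smul_left, huw, mul_zero])
    rwa [add_sub_cancel, norm_smul, hu, mul_one] at this
  obtain ⟨β, hβ, hαβ⟩ := Complex.exists_norm_eq_and_norm_sub_eq (α := α) (r := q)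
    (by nlinarith [norm_nonneg α, norm_nonneg w, norm_nonneg v])
  have hcomb (γ : ℂ) : ‖γ • u + (2⁻¹ : ℂ) • w‖ ^ 2 = ‖γ‖ ^ 2 + ‖w‖ ^ 2 / 4 ∧
      ⟪u, γ • u + (2⁻¹ : ℂ) • w⟫_ℂ = γ := by
    constructor
    · rw [norm_add_sq_eq_of_inner_eq_zero
        (by rw [inner_smul_left, inner_smul_right, huw]; simp), norm_smul, norm_smul, hu]
      norm_num
      ring
    · simp [hu, huw]
  have hs : 0 < 1 - q ^ 2 - ‖w‖ ^ 2 / 4 := by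
    nlinarith [norm_nonneg α, norm_nonneg w, norm_nonneg v]
  have hvc : v - (β • u + (2⁻¹ : ℂ) • w) = (α - β) • u + (2⁻¹ : ℂ) • w := by
    simp only [w]; module
  refine ⟨β • u + (2⁻¹ : ℂ) • w, √(1 - q ^ 2 - ‖w‖ ^ 2 / 4), Real.sqrt_pos.mpr hs,
    ?_, ?_, ?_, ?_, ?_⟩
  · rw [Submodule.mem_span_pair]
    exact ⟨β - α / 2, 2⁻¹, by simp only [w]; module⟩
  · rw [(hcomb β).1, Real.sq_sqrt hs.le, hβ]; ring
  · rw [hvc, (hcomb _).1, Real.sq_sqrt hs.le, hαβ]; ring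
  · rw [(hcomb β).2, hβ]
  · rw [hvc, (hcomb _).2, hαβ]

theorem not_finiteDimensional_of_forall_rankOne_mem {u : E} (hu : u ≠ 0) {L : Submodule ℂ E}
    (hL : ¬ FiniteDimensional ℂ L) {M : Submodule ℝ (E →L[ℂ] E)}
    (hM : ∀ z ∈ L, rankOne ℂ u z ∈ M) : ¬ FiniteDimensional ℝ M := by
  intro hfin
  let Φ : L →ₗ[ℝ] M :=
    { toFun := fun z => ⟨rankOne ℂ u z, hM z z.2⟩
      map_add' := fun z z' => by ext1; simp
      map_smul' := fun r z => by
        ext1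
        simpa using map_real_smul (rankOne ℂ u) (rankOne ℂ u).continuous r (z : E) }
  have hΦ : Function.Injective Φ := (injective_iff_map_eq_zero Φ).mpr fun z hz => by
    have hz' : rankOne ℂ u (z : E) = 0 := congrArg Subtype.val hz
    exact Subtype.ext ((rankOne_eq_zero.mp hz').resolve_left hu)
  have : FiniteDimensional ℝ L := FiniteDimensional.of_injective Φ hΦ
  exact hL (Module.Finite.of_restrictScalars_finite ℝ ℂ L)

section Complete

variable [CompleteSpace E]

theorem exists_unitary_apply_eq {x y : E} (hx : ‖x‖ = 1) (hy : ‖y‖ = 1) :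
    ∃ U ∈ unitary (E →L[ℂ] E), U x = y ∧ ∀ z, ⟪x, z⟫_ℂ = 0 → ⟪y, z⟫_ℂ = 0 → U z = z := by
  set ζ : ℂ := Complex.exp (Complex.arg ⟪x, y⟫_ℂ * Complex.I)
  have hζ : ‖ζ‖ = 1 := Complex.norm_exp_ofReal_mul_I _
  set Φ : E →L[ℂ] E := 1 + (ζ - 1) • rankOne ℂ x x
  have hΦ : Φ ∈ unitary (E →L[ℂ] E) :=
    (isStarProjection_rankOne_self hx).one_add_smul_mem_unitary hζ
  have hΦz : ∀ z, ⟪x, z⟫_ℂ = 0 → Φ z = z := fun z hz => by simp [Φ, hz]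
  have hΦx : Φ x = ζ • x := by simp [Φ, inner_self_eq_norm_sq_to_K, hx, sub_smul]
  -- The phase `ζ` makes `⟪ζ • x, y⟫` real, so the reflection in `(ζ • x - y)ᗮ` swaps `ζ • x`, `y`.
  set ρ := Submodule.reflection (ℂ ∙ (ζ • x - y))ᗮ
  have hρ : (ρ : E →L[ℂ] E) ∈ unitary (E →L[ℂ] E) := (Unitary.linearIsometryEquiv.symm ρ).2
  have hreal : ⟪ζ • x, y⟫_ℂ = ‖⟪x, y⟫_ℂ‖ := by
    have hpolar := Complex.norm_mul_exp_arg_mul_I ⟪x, y⟫_ℂ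
    rw [inner_smul_left]
    conv_lhs => rw [← hpolar]
    rw [mul_left_comm, Complex.conj_mul', hζ]
    simp
  refine ⟨ρ * Φ, mul_mem hρ hΦ, ?_, fun z hxz hyz => ?_⟩
  · show ρ (Φ x) = y
    rw [hΦx]
    refine Submodule.reflection_sub_of_inner_eq (by rw [norm_smul, hζ, hx, hy, one_mul]) ?_
    rw [hreal, ← inner_conj_symm y, hreal, Complex.conj_ofReal]
  · show ρ (Φ z) = z
    rw [hΦz z hxz]
    apply Submodule.reflection_mem_subspace_eq_self
    rw [Submodule.mem_orthogonal_singleton_iff_inner_right, inner_sub_left, inner_smul_left,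
      hxz, hyz]
    simp

theorem exists_unitary_apply_eq_pair {x₁ x₂ y₁ y₂ : E} (hx₁ : ‖x₁‖ = 1) (hx₂ : ‖x₂‖ = 1)
    (hx : ⟪x₁, x₂⟫_ℂ = 0) (hy₁ : ‖y₁‖ = 1) (hy₂ : ‖y₂‖ = 1) (hy : ⟪y₁, y₂⟫_ℂ = 0) :
    ∃ U ∈ unitary (E →L[ℂ] E), U x₁ = y₁ ∧ U x₂ = y₂ := by
  obtain ⟨U₁, hU₁, hU₁x, -⟩ := exists_unitary_apply_eq hx₁ hy₁
  obtain ⟨U₂, hU₂, hU₂x, hU₂fix⟩ :=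
    exists_unitary_apply_eq (x := U₁ x₂)
      (by rw [ContinuousLinearMap.norm_map_of_mem_unitary hU₁, hx₂]) hy₂
  refine ⟨U₂ * U₁, mul_mem hU₂ hU₁, ?_, hU₂x⟩
  show U₂ (U₁ x₁) = y₁
  rw [hU₁x]
  refine hU₂fix y₁ ?_ ?_
  · rw [← inner_conj_symm, ← hU₁x, ContinuousLinearMap.inner_map_map_of_mem_unitary hU₁, hx,
      map_zero]
  · rw [← inner_conj_symm, hy, map_zero]

theorem exists_eq_rankOne_of_rank_eq_one {T : E →L[ℂ] E}
    (hT : LinearMap.rank (T : E →ₗ[ℂ] E) = 1) : ∃ u v : E, ‖u‖ = 1 ∧ T = rankOne ℂ u v := by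
  rw [LinearMap.rank, rank_eq_one_iff] at hT
  obtain ⟨u₀, hu₀, hspan⟩ := hT
  set u : E := (‖(u₀ : E)‖ : ℂ)⁻¹ • u₀
  have hu : ‖u‖ = 1 := norm_smul_inv_norm (by simpa using hu₀)
  refine ⟨u, ContinuousLinearMap.adjoint T u, hu, ?_⟩
  -- `rankOne ℂ u u` is the orthogonal projection onto the range of `T`.
  rw [← rankOne_comp]
  ext x
  obtain ⟨c, hc⟩ := hspan ⟨T x, LinearMap.mem_range_self _ x⟩
  have hu₀' : (‖(u₀ : E)‖ : ℂ) ≠ 0 := by simpa using hu₀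
  have hTx : T x = (c * ‖(u₀ : E)‖) • u := by
    have hTx : T x = c • (u₀ : E) := (congrArg Subtype.val hc).symm
    rw [hTx, smul_smul, mul_assoc, mul_inv_cancel₀ hu₀', mul_one]
  rw [ContinuousLinearMap.comp_apply, hTx, rankOne_apply, inner_smul_right,
    inner_self_eq_norm_sq_to_K, hu]
  simp

end Complete

end InnerProductSpace

theorem Submodule.not_finiteDimensional_orthogonal {𝕜 F : Type*} [RCLike 𝕜]
    [NormedAddCommGroup F] [InnerProductSpace 𝕜 F] (hF : ¬ FiniteDimensional 𝕜 F)
    (K : Submodule 𝕜 F) [FiniteDimensional 𝕜 K] : ¬ FiniteDimensional 𝕜 Kᗮ := by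
  intro hK
  have hsup := Submodule.finiteDimensional_sup K Kᗮ
  rw [Submodule.sup_orthogonal_of_hasOrthogonalProjection] at hsup
  exact hF (Module.Finite.equiv Submodule.topEquiv)

theorem orthonormal_e : Orthonormal ℂ e := by
  convert (default : HilbertBasis ℕ ℂ H).orthonormal
  ext1 n
  exact ((default : HilbertBasis ℕ ℂ H).repr_symm_single n)

theorem not_finiteDimensional_H : ¬ FiniteDimensional ℂ H := fun _ =>
  Module.Finite.not_linearIndependent_of_infinite e orthonormal_e.linearIndependent

theorem rankOne_mem_SUorbit {q : ℝ} (hq0 : 0 < q) (hq1 : q < 1) {u g : H} (hu : ‖u‖ = 1)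
    (hg : ‖g‖ = 1) (hug : ‖⟪u, g⟫_ℂ‖ = q) : rankOne ℂ u g ∈ SUorbit q := by
  set p := √(1 - q ^ 2)
  have hp : 0 < p := Real.sqrt_pos.mpr (by nlinarith)
  set μ : ℂ := ⟪u, g⟫_ℂ / q
  have hμ : ‖μ‖ = 1 := by
    rw [norm_div, hug, Complex.norm_real, Real.norm_of_nonneg hq0.le, div_self hq0.ne']
  have hqμ : (q : ℂ) * μ = ⟪u, g⟫_ℂ := mul_div_cancel₀ _ (by exact_mod_cast hq0.ne')
  set r := g - ⟪u, g⟫_ℂ • u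
  have hur : ⟪u, r⟫_ℂ = 0 := by simp [r, hu]
  have hr : ‖r‖ = p := by
    have := norm_add_sq_eq_of_inner_eq_zero (x := ⟪u, g⟫_ℂ • u) (y := r)
      (by rw [inner_smul_left, hur, mul_zero])
    rw [add_sub_cancel, hg, norm_smul, hu, hug, mul_one] at this
    rw [← Real.sqrt_sq (norm_nonneg r)]
    congr 1
    linarith
  have hpC : (p : ℂ) ≠ 0 := by exact_mod_cast hp.ne'
  obtain ⟨W, hW, hW0, hW1⟩ := exists_unitary_apply_eq_pair (orthonormal_e.1 0)
    (orthonormal_e.1 1) (orthonormal_e.2 zero_ne_one) (y₁ := μ • u) (y₂ := (p : ℂ)⁻¹ • r)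
    (by rw [norm_smul, hμ, hu, one_mul])
    (by rw [norm_smul, hr, norm_inv, Complex.norm_real, Real.norm_of_nonneg hp.le,
      inv_mul_cancel₀ hp.ne'])
    (by rw [inner_smul_left, inner_smul_right, hur, mul_zero, mul_zero])
  have hWc : W ((q : ℂ) • e 0 + (p : ℂ) • e 1) = g := by
    rw [map_add, map_smul, map_smul, hW0, hW1, smul_smul, smul_smul, hqμ,
      mul_inv_cancel₀ hpC, one_smul, add_sub_cancel]
  refine ⟨conj μ, star W, by rwa [RCLike.norm_conj], Unitary.star_mem hW, ?_⟩
  rw [star_star, show Cq q = rankOne ℂ (e 0) ((q : ℂ) • e 0 + (p : ℂ) • e 1) from rfl,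
    rankOne_comp, comp_rankOne, ContinuousLinearMap.star_eq_adjoint,
    ContinuousLinearMap.adjoint_adjoint, hW0, hWc, map_smul, smul_apply,
    smul_smul, Complex.conj_mul', hμ]
  simp

/-- The paper's `𝔖(R)`. -/
def SUsummands (q : ℝ) (R : H →L[ℂ] H) : Set (H →L[ℂ] H) :=
  {A | A ∈ SUorbit q ∧ ∃ B ∈ SUorbit q, R = A + B}

theorem rankOne_mem_SUsummands {q : ℝ} (hq0 : 0 < q) (hq1 : q < 1) {u v g : H} (hu : ‖u‖ = 1)
    (hg : ‖g‖ = 1) (hvg : ‖v - g‖ = 1) (hug : ‖⟪u, g⟫_ℂ‖ = q) (huvg : ‖⟪u, v - g⟫_ℂ‖ = q) :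
    rankOne ℂ u g ∈ SUsummands q (rankOne ℂ u v) :=
  ⟨rankOne_mem_SUorbit hq0 hq1 hu hg hug, _, rankOne_mem_SUorbit hq0 hq1 hu hvg huvg, by
    rw [← map_add, add_sub_cancel]⟩

theorem rankOne_mem_span_SUsummands {q : ℝ} (hq0 : 0 < q) (hq1 : q < 1) {u v c : H} {s : ℝ}
    (hu : ‖u‖ = 1) (hs : 0 < s) (hc : c ∈ Submodule.span ℂ {u, v})
    (hcs : ‖c‖ ^ 2 + s ^ 2 = 1) (hvcs : ‖v - c‖ ^ 2 + s ^ 2 = 1) (huc : ‖⟪u, c⟫_ℂ‖ = q)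
    (huvc : ‖⟪u, v - c⟫_ℂ‖ = q) {z : H} (hz : z ∈ (Submodule.span ℂ {u, v})ᗮ) :
    rankOne ℂ u z ∈ Submodule.span ℝ (SUsummands q (rankOne ℂ u v)) := by
  set K := Submodule.span ℂ {u, v}
  have hmem (y : H) (hy : y ∈ Kᗮ) (hys : ‖y‖ = s) :
      rankOne ℂ u (c + y) ∈ SUsummands q (rankOne ℂ u v) := by
    have huy : ⟪u, y⟫_ℂ = 0 :=
      Submodule.inner_right_of_mem_orthogonal (Submodule.subset_span (by simp)) hy
    have hvc : v - (c + y) = (v - c) + -y := by abel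
    refine rankOne_mem_SUsummands hq0 hq1 hu ?_ ?_ ?_ ?_
    · rw [← pow_eq_one_iff_of_nonneg (norm_nonneg _) two_ne_zero,
        norm_add_sq_eq_of_inner_eq_zero (Submodule.inner_right_of_mem_orthogonal hc hy), hys, hcs]
    · have hvcK : v - c ∈ K := K.sub_mem (Submodule.subset_span (by simp)) hc
      rw [← pow_eq_one_iff_of_nonneg (norm_nonneg _) two_ne_zero, hvc,
        norm_add_sq_eq_of_inner_eq_zero (by rw [inner_neg_right,
          Submodule.inner_right_of_mem_orthogonal hvcK hy, neg_zero]), norm_neg, hys, hvcs]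
    · rwa [inner_add_right, huy, add_zero]
    · rwa [hvc, inner_add_right, inner_neg_right, huy, neg_zero, add_zero]
  rcases eq_or_ne z 0 with rfl | hz0
  · simp
  have hz0' : ‖z‖ ≠ 0 := norm_ne_zero_iff.mpr hz0
  set y : H := ((s / ‖z‖ : ℝ) : ℂ) • z
  have hy : y ∈ Kᗮ := Kᗮ.smul_mem _ hz
  have hys : ‖y‖ = s := by
    rw [norm_smul, Complex.norm_real, Real.norm_of_nonneg (by positivity), div_mul_cancel₀ _ hz0']
  have hz_eq : rankOne ℂ u z =
      (‖z‖ / (2 * s)) • (rankOne ℂ u (c + y) - rankOne ℂ u (c + -y)) := by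
    refine ContinuousLinearMap.ext fun w => ?_
    simp only [smul_apply, sub_apply, rankOne_apply, y, inner_add_left,
      inner_neg_left, inner_smul_left, Complex.conj_ofReal]
    rw [← sub_smul, RCLike.real_smul_eq_coe_smul (K := ℂ), smul_smul]
    have hzC : (‖z‖ : ℂ) ≠ 0 := by exact_mod_cast hz0'
    have hsC : (s : ℂ) ≠ 0 := by exact_mod_cast hs.ne'
    have hcancel : (‖z‖ : ℂ) / (2 * s) * (2 * (s / ‖z‖)) = 1 := by field_simp
    congr 1
    push_cast
    linear_combination (-⟪z, w⟫_ℂ) * hcancel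
  rw [hz_eq]
  exact Submodule.smul_mem _ _ (Submodule.sub_mem _
    (Submodule.subset_span (hmem y hy hys))
    (Submodule.subset_span (hmem (-y) (Kᗮ.neg_mem hy) (by rw [norm_neg, hys]))))

theorem statement11_general (q : ℝ)
    (R : H →L[ℂ] H) (hrank : LinearMap.rank (R : H →ₗ[ℂ] H) = 1)
    (hnorm : ‖R‖ < min (2 * q) (2 * Real.sqrt (1 - q ^ 2))) :
    ¬ FiniteDimensional ℝ
        ↥(Submodule.span ℝ {A : H →L[ℂ] H | A ∈ SUorbit q ∧ ∃ B ∈ SUorbit q, R = A + B}) := by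
  have hRq : ‖R‖ < 2 * q := hnorm.trans_le (min_le_left _ _)
  have hRp : ‖R‖ < 2 * √(1 - q ^ 2) := hnorm.trans_le (min_le_right _ _)
  have hq0 : 0 < q := by linarith [norm_nonneg R]
  have hq1 : q < 1 := by
    have : 0 < 1 - q ^ 2 := Real.sqrt_pos.mp (by linarith [norm_nonneg R])
    nlinarith
  obtain ⟨u, v, hu, rfl⟩ := exists_eq_rankOne_of_rank_eq_one hrank
  rw [norm_rankOne, hu, one_mul] at hRq hRp
  obtain ⟨c, s, hs, hc, hcs, hvcs, huc, huvc⟩ := exists_center_of_norm_lt hu hRq hRp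
  have := FiniteDimensional.span_of_finite ℂ (Set.toFinite {u, v})
  exact not_finiteDimensional_of_forall_rankOne_mem (norm_ne_zero_iff.mp (hu ▸ one_ne_zero))
    (Submodule.not_finiteDimensional_orthogonal not_finiteDimensional_H _)
    fun z hz => rankOne_mem_span_SUsummands hq0 hq1 hu hs hc hcs hvcs huc huvc hz

/-- If `R` is a rank-one bounded operator on `ℓ²(ℕ, ℂ)` with
`‖R‖ < min{2q, 2p}` (`p = √(1 − q²)`), then the real span `𝔐(R)` of
`𝔖(R) = {A ∈ SU(C_q) : R = A + B for some B ∈ SU(C_q)}` is infinite-dimensional over `ℝ`. -/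
theorem statement11 (q : ℝ) (hq0 : 0 < q) (hq1 : q ≤ 1)
    (R : H →L[ℂ] H) (hrank : LinearMap.rank (R : H →ₗ[ℂ] H) = 1)
    (hnorm : ‖R‖ < min (2 * q) (2 * Real.sqrt (1 - q ^ 2))) :
    ¬ FiniteDimensional ℝ
        ↥(Submodule.span ℝ {A : H →L[ℂ] H | A ∈ SUorbit q ∧ ∃ B ∈ SUorbit q, R = A + B}) :=
  statement11_general q R hrank hnorm

end
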